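/- arXiv:2111.13240 — 2 statements merged into one kernel-verified Lean document; each statement's English description precedes it below -/
import Mathlib

section
/- Let G be a weighted digraph, let S ⊆ V be a set of vertices, and let H = {(x,y) : x, y ∈ S, x ≠ y, y reachable from x in G}, with each edge (x,y) ∈ H weighted dist_G(x,y). For any vertices u, v, let P be a shortest u-v path in G ∪ H that has the minimum number of edges among all shortest u-v paths in G ∪ H. Then P contains at most 2 vertices of S. -/
/-!
Cutting a closed subwalk out of a walk removes at least one edge and, the weights being
nonnegative, does not increase the weight; so a shortest `u`-`v` walk in `G ∪ H` with the fewest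
edges has no repeated vertex. If it met three vertices `a, b, c ∈ S` in this order, its segment
from `a` to `c` would have at least two edges, and the single edge `(a,c) ∈ H` would replace it
without increasing the weight: every edge of `G ∪ H` weighs at least the `G`-distance between its
ends, so by the triangle inequality every `a`-`c` walk in `G ∪ H` weighs at least `dist_G(a,c)`.
-/

namespace Paper

variable {V : Type*}

/-- `IsWalk E u v l` : `l` is the list of vertices visited after `u` on a
directed walk from `u` to `v` in the digraph with edge relation `E`.
The number of edges of the walk is `l.length`. -/
def IsWalk (E : V → V → Prop) : V → V → List V → Prop
  | u, v, [] => u = v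
  | u, v, x :: xs => E u x ∧ IsWalk E x v xs

/-- `v` is reachable from `u` by a directed walk (possibly trivial). -/
def Reach (E : V → V → Prop) (u v : V) : Prop := ∃ l, IsWalk E u v l

/-- The transitive closure `G*`: pairs `(u,v)` with `u ≠ v` and `v` reachable from `u`. -/
def TC (E : V → V → Prop) (u v : V) : Prop := u ≠ v ∧ Reach E u v

/-- `dist E u v` : minimum number of edges on a directed walk from `u` to `v`. -/
noncomputable def dist (E : V → V → Prop) (u v : V) : ℕ :=
  sInf {k | ∃ l, IsWalk E u v l ∧ l.length = k}

/-- The digraph `G ∪ H` obtained by adding the edge set `H` to `E`. -/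
def addE (E : V → V → Prop) (H : Finset (V × V)) : V → V → Prop :=
  fun a b => E a b ∨ (a, b) ∈ H


/-- `wlen w u l` : total weight of the walk starting at `u` visiting the vertices of
`l` in order, with edge-weight function `w`. -/
def wlen (w : V → V → ℝ) : V → List V → ℝ
  | _, [] => 0
  | u, x :: xs => w u x + wlen w x xs

/-- `wdist E w u v` : the weighted distance from `u` to `v`, the infimum of the
weights of all directed `u`-`v` walks. -/
noncomputable def wdist (E : V → V → Prop) (w : V → V → ℝ) (u v : V) : ℝ :=
  sInf {r | ∃ l, IsWalk E u v l ∧ wlen w u l = r}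

/-- The weights are integers in `[1, W]`. -/
def IntWeights (E : V → V → Prop) (w : V → V → ℝ) (W : ℕ) : Prop :=
  ∀ u v : V, E u v → ∃ m : ℕ, 1 ≤ m ∧ m ≤ W ∧ w u v = (m : ℝ)

/-- The weight function of `G ∪ H`, where each hopset edge `(u,v) ∈ H` is weighted by
`dist_G(u,v)`. -/
noncomputable def hopW [DecidableEq V] (E : V → V → Prop) (w : V → V → ℝ)
    (H : Finset (V × V)) : V → V → ℝ :=
  fun a b => if (a, b) ∈ H then wdist E w a b else w a b

/-- `H` is a `(β,ε)`-hopset for the weighted digraph `(E,w)`: a set of edges of the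
transitive closure, each `(u,v)` weighted `dist_G(u,v)`, such that for every pair
`u,v` with `v` reachable from `u`, no walk in `G ∪ H` is shorter than `dist_G(u,v)`,
and some walk in `G ∪ H` with at most `β` hops has weight at most
`(1+ε)·dist_G(u,v)`. -/
def IsHopset [DecidableEq V] (E : V → V → Prop) (w : V → V → ℝ)
    (β : ℕ) (ε : ℝ) (H : Finset (V × V)) : Prop :=
  (∀ e ∈ H, TC E e.1 e.2) ∧
  ∀ u v : V, TC E u v →
    (∀ l, IsWalk (addE E H) u v l → l.length ≤ β →
      wdist E w u v ≤ wlen (hopW E w H) u l) ∧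
    (∃ l, IsWalk (addE E H) u v l ∧ l.length ≤ β ∧
      wlen (hopW E w H) u l ≤ (1 + ε) * wdist E w u v)

open Classical

open scoped List

section Lists

variable {α : Type*}

theorem exists_split_of_cons_sublist {x u : α} {t p : List α} (h : x :: t <+ u :: p) :
    ∃ q s, p = q ++ s ∧ q.getLastD u = x ∧ t <+ s := by
  induction p generalizing u with
  | nil =>
    obtain h | ⟨_, ⟨rfl, rfl⟩, ht⟩ := List.sublist_cons_iff.mp h
    · simp at h
    · exact ⟨[], [], rfl, rfl, ht⟩
  | cons a p ih =>
    obtain h | ⟨_, ⟨rfl, rfl⟩, ht⟩ := List.sublist_cons_iff.mp h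
    · obtain ⟨q, s, rfl, hq, ht⟩ := ih h
      exact ⟨a :: q, s, rfl, by rw [List.getLastD_cons, hq], ht⟩
    · exact ⟨[], a :: p, rfl, rfl, ht⟩

theorem exists_split_of_sublist_concat {x y u : α} {t p : List α}
    (h : x :: (t ++ [y]) <+ u :: p) :
    ∃ q r s, p = q ++ (r ++ [y]) ++ s ∧ q.getLastD u = x ∧ t <+ r := by
  obtain ⟨q, s', rfl, hq, hs'⟩ := exists_split_of_cons_sublist h
  obtain ⟨r₁, r₂, rfl, ht, hy⟩ := List.append_sublist_iff.mp hs'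
  obtain ⟨r₃, s, rfl⟩ := List.append_of_mem (List.singleton_sublist.mp hy)
  exact ⟨q, r₁ ++ r₃, s, by simp, hq, ht.trans (List.sublist_append_left _ _)⟩

theorem exists_sublist_of_two_lt_card_filter [DecidableEq α] {l : List α} (hl : l.Nodup)
    (P : α → Prop) [DecidablePred P] (h : 2 < (l.toFinset.filter P).card) :
    ∃ a b c, [a, b, c] <+ l ∧ P a ∧ P c ∧ a ≠ c := by
  have hfilter : l.toFinset.filter P = (l.filter (P ·)).toFinset := by ext; simp
  rw [hfilter, List.toFinset_card_of_nodup (hl.filter _)] at h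
  match hf : l.filter (P ·), h with
  | [], h | [_], h | [_, _], h => simp at h
  | a :: b :: c :: rest, _ =>
    have hsub : a :: b :: c :: rest <+ l := hf ▸ List.filter_sublist
    have hmem : ∀ z ∈ a :: b :: c :: rest, P z := fun z hz =>
      of_decide_eq_true (List.mem_filter.mp (hf ▸ hz : z ∈ l.filter (P ·))).2
    have hnd : (a :: b :: c :: rest).Nodup := hf ▸ hl.filter _
    exact ⟨a, b, c, (List.sublist_append_left [a, b, c] rest).trans hsub, hmem a (by simp),
      hmem c (by simp), by rintro rfl; simp at hnd⟩

end Lists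

section Walks

variable {E : V → V → Prop} {w : V → V → ℝ} {u v x y : V}

theorem IsWalk.append {l₁ l₂ : List V} (h₁ : IsWalk E u x l₁) (h₂ : IsWalk E x v l₂) :
    IsWalk E u v (l₁ ++ l₂) := by
  induction l₁ generalizing u with
  | nil => cases h₁; exact h₂
  | cons a l ih => exact ⟨h₁.1, ih h₁.2⟩

theorem IsWalk.of_append {l₁ l₂ : List V} (h : IsWalk E u v (l₁ ++ l₂)) :
    IsWalk E u (l₁.getLastD u) l₁ ∧ IsWalk E (l₁.getLastD u) v l₂ := by
  induction l₁ generalizing u with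
  | nil => exact ⟨rfl, h⟩
  | cons a l ih =>
    rw [List.getLastD_cons]
    exact ⟨⟨h.1, (ih h.2).1⟩, (ih h.2).2⟩

theorem IsWalk.getLastD_eq {l : List V} (h : IsWalk E u v l) : l.getLastD u = v := by
  induction l generalizing u with
  | nil => exact h
  | cons a l ih => rw [List.getLastD_cons, ih h.2]

theorem wlen_append (l₁ l₂ : List V) :
    wlen w u (l₁ ++ l₂) = wlen w u l₁ + wlen w (l₁.getLastD u) l₂ := by
  induction l₁ generalizing u with
  | nil => simp [wlen]
  | cons a l ih => simp only [List.cons_append, wlen, ih, List.getLastD_cons, add_assoc]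

theorem wlen_nonneg (hw : ∀ a b, E a b → 0 ≤ w a b) {l : List V} (h : IsWalk E u v l) :
    0 ≤ wlen w u l := by
  induction l generalizing u with
  | nil => exact le_rfl
  | cons a l ih => exact add_nonneg (hw u a h.1) (ih h.2)

theorem reach_of_isWalk {E' : V → V → Prop} (hE : ∀ a b, E' a b → Reach E a b) {l : List V}
    (h : IsWalk E' u v l) : Reach E u v := by
  induction l generalizing u with
  | nil => exact ⟨[], h⟩
  | cons a l ih =>
    obtain ⟨l₁, h₁⟩ := hE u a h.1
    obtain ⟨l₂, h₂⟩ := ih h.2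
    exact ⟨l₁ ++ l₂, h₁.append h₂⟩

theorem IsWalk.exists_segment_of_sublist {p t : List V} (hp : IsWalk E u v p)
    (h : x :: (t ++ [y]) <+ u :: p) :
    ∃ q r s, p = q ++ r ++ s ∧ IsWalk E u x q ∧ IsWalk E x y r ∧ IsWalk E y v s ∧
      t.length < r.length := by
  obtain ⟨q, r, s, rfl, hq, ht⟩ := exists_split_of_sublist_concat h
  have hy : (q ++ (r ++ [y])).getLastD u = y := by rw [← List.append_assoc, List.getLastD_concat]
  obtain ⟨hqr, hs⟩ := hp.of_append
  obtain ⟨hq', hr⟩ := hqr.of_append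
  rw [hy] at hs hr
  rw [hq] at hq' hr
  exact ⟨q, r ++ [y], s, rfl, hq', hr, hs, by simpa using Nat.lt_succ_of_le ht.length_le⟩

end Walks

section Distance

variable {E : V → V → Prop} {w : V → V → ℝ} {u v x : V}

theorem bddBelow_walk_weights (hw : ∀ a b, E a b → 0 ≤ w a b) (u v : V) :
    BddBelow {r | ∃ l, IsWalk E u v l ∧ wlen w u l = r} :=
  ⟨0, by rintro _ ⟨l, hl, rfl⟩; exact wlen_nonneg hw hl⟩

theorem wdist_le_wlen (hw : ∀ a b, E a b → 0 ≤ w a b) {l : List V} (h : IsWalk E u v l) :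
    wdist E w u v ≤ wlen w u l :=
  csInf_le (bddBelow_walk_weights hw u v) ⟨l, h, rfl⟩

theorem wdist_nonneg (hw : ∀ a b, E a b → 0 ≤ w a b) (u v : V) : 0 ≤ wdist E w u v :=
  Real.sInf_nonneg (by rintro _ ⟨l, hl, rfl⟩; exact wlen_nonneg hw hl)

open scoped Pointwise in
theorem wdist_triangle (hw : ∀ a b, E a b → 0 ≤ w a b) (hux : Reach E u x)
    (hxv : Reach E x v) :
    wdist E w u v ≤ wdist E w u x + wdist E w x v := by
  obtain ⟨l₁, h₁⟩ := hux
  obtain ⟨l₂, h₂⟩ := hxv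
  set A := {r | ∃ l, IsWalk E u x l ∧ wlen w u l = r}
  set B := {r | ∃ l, IsWalk E x v l ∧ wlen w x l = r}
  calc wdist E w u v ≤ sInf (A + B) := by
        refine csInf_le_csInf (bddBelow_walk_weights hw u v)
          ⟨_, _, ⟨l₁, h₁, rfl⟩, _, ⟨l₂, h₂, rfl⟩, rfl⟩ ?_
        rintro _ ⟨_, ⟨m₁, hm₁, rfl⟩, _, ⟨m₂, hm₂, rfl⟩, rfl⟩
        exact ⟨m₁ ++ m₂, hm₁.append hm₂, by rw [wlen_append, hm₁.getLastD_eq]⟩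
    _ = sInf A + sInf B := csInf_add ⟨_, l₁, h₁, rfl⟩ (bddBelow_walk_weights hw u x)
        ⟨_, l₂, h₂, rfl⟩ (bddBelow_walk_weights hw x v)

theorem wdist_le_wlen_of_forall_edge {E' : V → V → Prop} {w' : V → V → ℝ}
    (hw : ∀ a b, E a b → 0 ≤ w a b) (hE : ∀ a b, E' a b → Reach E a b)
    (hle : ∀ a b, E' a b → wdist E w a b ≤ w' a b) {l : List V} (h : IsWalk E' u v l) :
    wdist E w u v ≤ wlen w' u l := by
  induction l generalizing u with
  | nil => cases h; exact wdist_le_wlen hw (l := []) rfl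
  | cons a l ih =>
    calc wdist E w u v ≤ wdist E w u a + wdist E w a v :=
          wdist_triangle hw (hE u a h.1) (reach_of_isWalk hE h.2)
      _ ≤ w' u a + wlen w' a l := add_le_add (hle u a h.1) (ih h.2)

end Distance

def IsMinHopShortestWalk (E : V → V → Prop) (w : V → V → ℝ) (u v : V) (p : List V) :
    Prop :=
  IsWalk E u v p ∧ wlen w u p = wdist E w u v ∧
    ∀ q, IsWalk E u v q → wlen w u q = wdist E w u v → p.length ≤ q.length

namespace IsMinHopShortestWalk

variable {E : V → V → Prop} {w : V → V → ℝ} {u v x y : V} {p : List V}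

theorem length_le (hw : ∀ a b, E a b → 0 ≤ w a b) (hp : IsMinHopShortestWalk E w u v p)
    {q : List V} (hq : IsWalk E u v q) (hle : wlen w u q ≤ wlen w u p) : p.length ≤ q.length :=
  hp.2.2 q hq (le_antisymm (hle.trans hp.2.1.le) (wdist_le_wlen hw hq))

theorem length_le_of_segment (hw : ∀ a b, E a b → 0 ≤ w a b) {q r s r' : List V}
    (hp : IsMinHopShortestWalk E w u v (q ++ r ++ s)) (hq : IsWalk E u x q)
    (hr : IsWalk E x y r) (hs : IsWalk E y v s) (hr' : IsWalk E x y r')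
    (hle : wlen w x r' ≤ wlen w x r) : r.length ≤ r'.length := by
  have hweight : ∀ m, IsWalk E x y m →
      wlen w u (q ++ m ++ s) = wlen w u q + wlen w x m + wlen w y s := by
    intro m hm
    rw [wlen_append, wlen_append, (hq.append hm).getLastD_eq, hq.getLastD_eq]
  have := hp.length_le hw ((hq.append hr').append hs)
    (by rw [hweight r' hr', hweight r hr]; linarith)
  simp only [List.length_append] at this
  omega

theorem nodup (hw : ∀ a b, E a b → 0 ≤ w a b) (hp : IsMinHopShortestWalk E w u v p) :
    (u :: p).Nodup := by
  refine List.nodup_iff_sublist.mpr fun x hx => ?_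
  obtain ⟨q, r, s, rfl, hq, hr, hs, hlen⟩ := hp.1.exists_segment_of_sublist (t := []) hx
  have := hp.length_le_of_segment hw hq hr hs (r' := []) rfl (wlen_nonneg hw hr)
  simp only [List.length_nil] at this hlen
  omega

end IsMinHopShortestWalk

section Clique

variable {E : V → V → Prop} {w : V → V → ℝ} {S : Finset V} {a b c : V}

def cliqueAdj (E : V → V → Prop) (S : Finset V) : V → V → Prop :=
  fun a b => E a b ∨ (a ∈ S ∧ b ∈ S ∧ TC E a b)

-- With `[DecidableEq V]` the `if` below elaborates exactly as in the theorem's `w'`, instead of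
-- through `Classical.propDecidable` (which `open Classical` would otherwise supply).
noncomputable def cliqueWeight [DecidableEq V] (E : V → V → Prop) (w : V → V → ℝ)
    (S : Finset V) : V → V → ℝ :=
  fun a b => if a ∈ S ∧ b ∈ S ∧ TC E a b then wdist E w a b else w a b

theorem reach_of_cliqueAdj (h : cliqueAdj E S a b) : Reach E a b :=
  h.elim (fun h => ⟨[b], h, rfl⟩) (fun h => h.2.2.2)

theorem wdist_le_cliqueWeight [DecidableEq V] (hw : ∀ a b, E a b → 0 ≤ w a b)
    (h : cliqueAdj E S a b) :
    wdist E w a b ≤ cliqueWeight E w S a b := by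
  unfold cliqueWeight
  split_ifs with hab
  · exact le_rfl
  · exact (wdist_le_wlen hw (show IsWalk E a b [b] from ⟨h.resolve_right hab, rfl⟩)).trans_eq
      (add_zero _)

theorem cliqueWeight_nonneg [DecidableEq V] (hw : ∀ a b, E a b → 0 ≤ w a b)
    (h : cliqueAdj E S a b) :
    0 ≤ cliqueWeight E w S a b :=
  (wdist_nonneg hw a b).trans (wdist_le_cliqueWeight hw h)

theorem IsWalk.cliqueAdj_shortcut [DecidableEq V] (hw : ∀ a b, E a b → 0 ≤ w a b)
    (ha : a ∈ S) (hc : c ∈ S) (hac : a ≠ c) {r : List V} (hr : IsWalk (cliqueAdj E S) a c r) :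
    IsWalk (cliqueAdj E S) a c [c] ∧
      wlen (cliqueWeight E w S) a [c] ≤ wlen (cliqueWeight E w S) a r := by
  have hH : a ∈ S ∧ c ∈ S ∧ TC E a c :=
    ⟨ha, hc, hac, reach_of_isWalk (fun _ _ => reach_of_cliqueAdj) hr⟩
  refine ⟨⟨Or.inr hH, rfl⟩, ?_⟩
  calc wlen (cliqueWeight E w S) a [c] = wdist E w a c := by simp [wlen, cliqueWeight, hH]
    _ ≤ _ := wdist_le_wlen_of_forall_edge hw (fun _ _ => reach_of_cliqueAdj)
      (fun _ _ => wdist_le_cliqueWeight hw) hr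

end Clique

/-- Let `G` be a weighted digraph, `S ⊆ V` a set of vertices, and
`H = {(x,y) : x,y ∈ S, x ≠ y, y reachable from x}`, each edge `(x,y)` weighted
`dist_G(x,y)`. For vertices `u, v`, let `P` be a shortest `u`-`v` path in `G ∪ H`
having the minimum number of edges among all shortest `u`-`v` paths in `G ∪ H`.
Then `P` contains at most `2` vertices of `S`. -/
theorem min_hop_shortest_path_meets_clique (n : ℕ)
    (E : Fin n → Fin n → Prop) (w : Fin n → Fin n → ℝ)
    (hw : ∀ u v : Fin n, E u v → 0 < w u v)
    (S : Finset (Fin n))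
    (E' : Fin n → Fin n → Prop)
    (hE' : E' = fun a b => E a b ∨ (a ∈ S ∧ b ∈ S ∧ TC E a b))
    (w' : Fin n → Fin n → ℝ)
    (hw' : w' = fun a b =>
      if a ∈ S ∧ b ∈ S ∧ TC E a b then wdist E w a b else w a b)
    (u v : Fin n) (p : List (Fin n))
    (hwalk : IsWalk E' u v p)
    (hshort : wlen w' u p = wdist E' w' u v)
    (hmin : ∀ q : List (Fin n), IsWalk E' u v q →
      wlen w' u q = wdist E' w' u v → p.length ≤ q.length) :
    ((u :: p).toFinset.filter (· ∈ S)).card ≤ 2 := by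
  subst hE' hw'
  have hw₀ : ∀ a b, E a b → 0 ≤ w a b := fun a b h => (hw a b h).le
  have hw₀' : ∀ a b, cliqueAdj E S a b → 0 ≤ cliqueWeight E w S a b :=
    fun _ _ => cliqueWeight_nonneg hw₀
  have hp : IsMinHopShortestWalk (cliqueAdj E S) (cliqueWeight E w S) u v p :=
    ⟨hwalk, hshort, hmin⟩
  by_contra! hcard
  obtain ⟨a, b, c, habc, ha, hc, hac⟩ := exists_sublist_of_two_lt_card_filter
    (hp.nodup hw₀') _ hcard
  obtain ⟨q, r, s, rfl, hq, hr, hs, hlen⟩ := hp.1.exists_segment_of_sublist (t := [b]) habc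
  obtain ⟨hedge, hle⟩ := hr.cliqueAdj_shortcut hw₀ ha hc hac
  have := hp.length_le_of_segment hw₀' hq hr hs hedge hle
  simp only [List.length_singleton] at this hlen
  omega

end Paper
end

section
/- Let G be an n-vertex directed acyclic graph, let D, k, Δ be positive integers, and let 𝒫 be a collection of directed paths of G, each of length exactly D, such that: (a) each P ∈ 𝒫 is the unique directed path in G between its two endpoints; (b) every vertex of G lies on at most Δ paths of 𝒫; (c) for every edge e of the transitive closure G*, there is at most one path P ∈ 𝒫 such that adding e to G reduces the distance between the endpoints of P to strictly below D. Let G_k be the digraph obtained from G by replacing each vertex v by a directed path Q_v of length k and replacing each edge (u,v) of G by an edge from the last vertex of Q_u to the first vertex of Q_v. Then every set E' of edges from the transitive closure of G_k for which the diameter of G_k ∪ E' is strictly less than D·k/2 satisfies |E'| ≥ min(|𝒫|/2, |𝒫|·D/(4Δ)). -/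
namespace Paper

variable {V : Type*}

/-- `FPath R p` : `p` lists the `m+1` vertices of a directed path with `m` hops in the
digraph with edge relation `R` (distinct vertices, consecutive edges in `R`). -/
def FPath (R : V → V → Prop) {m : ℕ} (p : Fin (m + 1) → V) : Prop :=
  Function.Injective p ∧ ∀ i : Fin m, R (p i.castSucc) (p i.succ)

/-- `fLen w p` : the length (total weight) of the path `p` under edge weights `w`. -/
noncomputable def fLen (w : V → V → ℝ) {m : ℕ} (p : Fin (m + 1) → V) : ℝ :=
  ∑ i : Fin m, w (p i.castSucc) (p i.succ)

/-- A digraph is acyclic (a DAG) if it has no nonempty closed walk. -/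
def Acyclic (E : V → V → Prop) : Prop :=
  ∀ (v : V) (l : List V), IsWalk E v v l → l = []

open Classical

/-!
Fix `p ∈ Ps` from `s` to `t`. Since `G` is acyclic and `p` is the unique `s`–`t` path, every
`s`–`t` walk of `G` has length `D`, so `dist s a + dist a b + dist b t = D` whenever `a`
reaches `b` between `s` and `t`. A shortest walk from `(s, 0)` to `(t, k)` in `G_k ∪ E'` stays
between `s` and `t`; along it the height `dist s v * (k + 1) + level` grows by exactly one per
edge of `G_k` and by less than `(k + 1) * (dist a b + 1)` per shortcut `(a, b) ∈ E'`. The height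
grows by `D * (k + 1) + k` over fewer than `D * k / 2` edges, so the shortcuts used for `p` have
total weight `∑ (dist a b + 1) > D / 2`. A shortcut with `dist a b ≤ 1` starts on every path it
serves, so it serves at most `Δ` paths; a longer one shortens every path it serves, so it serves
at most one. Double counting the weights gives `|Ps| * (D + 1) ≤ 2 * |E'| * max (2Δ) (D + 1)`.
-/

open Finset

section Walks

variable {E : V → V → Prop} {u v w : V} {l m : List V}

theorem IsWalk.mono {E' : V → V → Prop} (hEE : ∀ a b, E a b → E' a b)
    (h : IsWalk E u v l) : IsWalk E' u v l := by
  induction l generalizing u with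
  | nil => exact h
  | cons x xs ih => exact ⟨hEE _ _ h.1, ih h.2⟩

theorem IsWalk.append_s16 (h : IsWalk E u v l) (h' : IsWalk E v w m) : IsWalk E u w (l ++ m) := by
  induction l generalizing u with
  | nil => exact (h : u = v) ▸ h'
  | cons x xs ih => exact ⟨h.1, ih h.2⟩

theorem IsWalk.getElem_rel (h : IsWalk E u v l) (i : ℕ) (hi : i + 1 < (u :: l).length) :
    E (u :: l)[i] (u :: l)[i + 1] := by
  induction l generalizing u i with
  | nil => simp at hi
  | cons x xs ih =>
    cases i with
    | zero => exact h.1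
    | succ i => exact ih h.2 i (by simpa using hi)

theorem IsWalk.getElem_length (h : IsWalk E u v l) : (u :: l)[l.length] = v := by
  induction l generalizing u with
  | nil => exact h
  | cons x xs ih => exact ih h.2

theorem Reach.refl (u : V) : Reach E u u := ⟨[], rfl⟩

theorem Reach.single (h : E u v) : Reach E u v := ⟨[v], h, rfl⟩

theorem Reach.trans (h : Reach E u v) (h' : Reach E v w) : Reach E u w :=
  let ⟨l, hl⟩ := h
  let ⟨m, hm⟩ := h'
  ⟨l ++ m, hl.append_s16 hm⟩

theorem Reach.mono {E' : V → V → Prop} (hEE : ∀ a b, E a b → E' a b) (h : Reach E u v) :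
    Reach E' u v :=
  let ⟨l, hl⟩ := h
  ⟨l, hl.mono hEE⟩

theorem IsWalk.reach_of_mem (h : IsWalk E u w l) (hv : v ∈ u :: l) :
    Reach E u v ∧ Reach E v w := by
  induction l generalizing u with
  | nil =>
    obtain rfl : v = u := List.mem_singleton.1 hv
    exact ⟨Reach.refl _, _, h⟩
  | cons x xs ih =>
    rcases List.mem_cons.1 hv with rfl | hv
    · exact ⟨Reach.refl _, _, h⟩
    · obtain ⟨hxv, hvw⟩ := ih h.2 hv
      exact ⟨(Reach.single h.1).trans hxv, hvw⟩

theorem dist_le_length (h : IsWalk E u v l) : dist E u v ≤ l.length :=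
  Nat.sInf_le ⟨l, h, rfl⟩

theorem dist_self (u : V) : dist E u u = 0 :=
  Nat.le_zero.1 (dist_le_length (l := []) rfl)

theorem Reach.exists_isWalk_length_eq_dist (h : Reach E u v) :
    ∃ l, IsWalk E u v l ∧ l.length = dist E u v :=
  let ⟨l, hl⟩ := h
  Nat.sInf_mem (s := {k | ∃ l, IsWalk E u v l ∧ l.length = k}) ⟨l.length, l, hl, rfl⟩

theorem Acyclic.nodup (hacy : Acyclic E) (h : IsWalk E u v l) : (u :: l).Nodup := by
  induction l generalizing u with
  | nil => exact List.nodup_singleton u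
  | cons x xs ih =>
    refine List.nodup_cons.2 ⟨fun hu => ?_, ih h.2⟩
    obtain ⟨m, hm⟩ := (h.2.reach_of_mem hu).1
    exact List.cons_ne_nil _ _ (hacy u (x :: m) ⟨h.1, hm⟩)

theorem Acyclic.exists_fPath (hacy : Acyclic E) (h : IsWalk E u v l) :
    ∃ q : Fin (l.length + 1) → V, FPath E q ∧ q 0 = u ∧ q (Fin.last _) = v ∧
      ∀ w ∈ u :: l, ∃ i, q i = w := by
  have hedge (i : Fin l.length) : E (u :: l)[(i : ℕ)] (u :: l)[(i : ℕ) + 1] :=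
    h.getElem_rel i (by simp)
  refine ⟨fun i => (u :: l)[(i : ℕ)], ⟨fun i j hij => ?_, hedge⟩, rfl, h.getElem_length,
    fun w hw => ?_⟩
  · exact Fin.ext (Fin.ext_iff.1 (List.nodup_iff_injective_getElem.1 (hacy.nodup h)
      (a₁ := ⟨i, i.2⟩) (a₂ := ⟨j, j.2⟩) hij))
  · obtain ⟨i, hi, rfl⟩ := List.mem_iff_getElem.1 hw
    exact ⟨⟨i, by simpa using hi⟩, rfl⟩

end Walks

def IsUniquePath (E : V → V → Prop) {D : ℕ} (p : Fin (D + 1) → V) : Prop :=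
  ∀ (m : ℕ) (q : Fin (m + 1) → V), FPath E q →
    q 0 = p 0 → q (Fin.last m) = p (Fin.last D) →
    ∃ hm : m = D, ∀ i : Fin (m + 1), q i = p (Fin.cast (by rw [hm]) i)

section Paths

variable {E : V → V → Prop} {D : ℕ} {p : Fin (D + 1) → V} {v : V} {l : List V}

theorem FPath.reach (hp : FPath E p) (i : Fin (D + 1)) : Reach E (p 0) (p i) := by
  induction i using Fin.induction with
  | zero => exact Reach.refl _
  | succ i ih => exact ih.trans (Reach.single (hp.2 i))

theorem IsUniquePath.length_eq_of_isWalk (hacy : Acyclic E) (hp : IsUniquePath E p)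
    (h : IsWalk E (p 0) (p (Fin.last D)) l) : l.length = D := by
  obtain ⟨q, hq, hq0, hqD, -⟩ := hacy.exists_fPath h
  exact (hp _ q hq hq0 hqD).1

theorem IsUniquePath.mem_range (hacy : Acyclic E) (hp : IsUniquePath E p)
    (hsv : Reach E (p 0) v) (hvt : Reach E v (p (Fin.last D))) : ∃ i, p i = v := by
  obtain ⟨l, hl⟩ := hsv
  obtain ⟨m, hm⟩ := hvt
  obtain ⟨q, hq, hq0, hqD, hqmem⟩ := hacy.exists_fPath (hl.append_s16 hm)
  obtain ⟨_, hqp⟩ := hp _ q hq hq0 hqD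
  obtain ⟨i, rfl⟩ := hqmem v (List.mem_append_left m (hl.getElem_length ▸ List.getElem_mem _))
  exact ⟨_, (hqp i).symm⟩

end Paths

section Geodesic

variable {E : V → V → Prop} {s t a b : V} {D : ℕ} {m : List V}
  (hst : ∀ l, IsWalk E s t l → l.length = D)
include hst

theorem dist_add_length_add_dist (hsa : Reach E s a) (hm : IsWalk E a b m)
    (hbt : Reach E b t) : dist E s a + m.length + dist E b t = D := by
  obtain ⟨l₁, hl₁, hlen₁⟩ := hsa.exists_isWalk_length_eq_dist
  obtain ⟨l₃, hl₃, hlen₃⟩ := hbt.exists_isWalk_length_eq_dist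
  have := hst _ ((hl₁.append_s16 hm).append_s16 hl₃)
  simp only [List.length_append] at this
  omega

theorem dist_eq_dist_add_length (hsa : Reach E s a) (hm : IsWalk E a b m)
    (hbt : Reach E b t) : dist E s b = dist E s a + m.length := by
  have hb := dist_add_length_add_dist hst (hsa.trans ⟨m, hm⟩) (m := []) rfl hbt
  have := dist_add_length_add_dist hst hsa hm hbt
  simp only [List.length_nil] at hb
  omega

theorem dist_eq_of_reach (h : Reach E s t) : dist E s t = D := by
  obtain ⟨l, hl, hlen⟩ := h.exists_isWalk_length_eq_dist
  rw [← hlen, hst l hl]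

theorem dist_le_of_between (hsa : Reach E s a) (hab : Reach E a b) (hbt : Reach E b t) :
    dist E a b ≤ D := by
  obtain ⟨m, hm, hlen⟩ := hab.exists_isWalk_length_eq_dist
  have := dist_add_length_add_dist hst hsa hm hbt
  omega

theorem dist_addEdge_lt (hsa : Reach E s a) (hab : Reach E a b) (hbt : Reach E b t)
    (h2 : 2 ≤ dist E a b) : dist (fun x y => E x y ∨ (x = a ∧ y = b)) s t < D := by
  obtain ⟨l₁, hl₁, hlen₁⟩ := hsa.exists_isWalk_length_eq_dist
  obtain ⟨m, hm, hlen⟩ := hab.exists_isWalk_length_eq_dist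
  obtain ⟨l₃, hl₃, hlen₃⟩ := hbt.exists_isWalk_length_eq_dist
  set E' : V → V → Prop := fun x y => E x y ∨ (x = a ∧ y = b)
  have hwalk : IsWalk E' s t (l₁ ++ [b] ++ l₃) :=
    ((hl₁.mono fun _ _ => Or.inl).append_s16
      (show IsWalk E' a b [b] from ⟨Or.inr ⟨rfl, rfl⟩, rfl⟩)).append_s16
      (hl₃.mono fun _ _ => Or.inl)
  have := dist_add_length_add_dist hst hsa hm hbt
  have := dist_le_length hwalk
  simp only [List.length_append, List.length_singleton] at this
  omega

end Geodesic

section AddEdges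

variable {E : V → V → Prop} {H : Finset (V × V)} {u v : V} {l : List V}

theorem IsWalk.exists_of_addE (hH : ∀ e ∈ H, TC E e.1 e.2) (h : IsWalk (addE E H) u v l) :
    ∃ l', IsWalk E u v l' ∧ l.length ≤ l'.length := by
  induction l generalizing u with
  | nil => exact ⟨[], h, le_rfl⟩
  | cons x xs ih =>
    obtain ⟨l', hl', hlen⟩ := ih h.2
    rcases h.1 with hux | hux
    · exact ⟨x :: l', ⟨hux, hl'⟩, by simpa using hlen⟩
    · obtain ⟨hne, m, hm⟩ := hH _ hux
      have : m ≠ [] := by rintro rfl; exact hne hm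
      refine ⟨m ++ l', hm.append_s16 hl', ?_⟩
      have := List.length_pos_iff.2 this
      simp only [List.length_cons, List.length_append]
      omega

theorem Reach.of_addE (hH : ∀ e ∈ H, TC E e.1 e.2) (h : Reach (addE E H) u v) : Reach E u v :=
  let ⟨_, hl⟩ := h
  let ⟨l', hl', _⟩ := hl.exists_of_addE hH
  ⟨l', hl'⟩

theorem Acyclic.addE (hacy : Acyclic E) (hH : ∀ e ∈ H, TC E e.1 e.2) : Acyclic (addE E H) := by
  intro v l h
  obtain ⟨l', hl', hlen⟩ := h.exists_of_addE hH
  rw [hacy v l' hl'] at hlen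
  simpa using hlen

end AddEdges

/-- The digraph `G_k`: vertex `v` of `G` becomes the column `(v, 0) → ⋯ → (v, k)`, and an edge
`(u, v)` of `G` becomes `(u, k) → (v, 0)`. -/
def gadget (E : V → V → Prop) (k : ℕ) : V × Fin (k + 1) → V × Fin (k + 1) → Prop :=
  fun x y => (x.1 = y.1 ∧ (x.2 : ℕ) + 1 = (y.2 : ℕ)) ∨
    (E x.1 y.1 ∧ x.2 = Fin.last k ∧ (y.2 : ℕ) = 0)

section Gadget

variable {E : V → V → Prop} {k : ℕ} {x y : V × Fin (k + 1)} {u v : V}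
  {l : List (V × Fin (k + 1))}

theorem IsWalk.gadget_fst (h : IsWalk (gadget E k) x y l) :
    ∃ m, IsWalk E x.1 y.1 m ∧ (x.2 : ℕ) + l.length = m.length * (k + 1) + y.2 := by
  induction l generalizing x with
  | nil =>
    obtain rfl : x = y := h
    exact ⟨[], rfl, by simp⟩
  | cons z zs ih =>
    obtain ⟨m, hm, hlen⟩ := ih h.2
    rcases h.1 with ⟨h1, h2⟩ | ⟨h1, h2, h3⟩
    · refine ⟨m, h1 ▸ hm, ?_⟩
      simp only [List.length_cons]
      omega
    · refine ⟨z.1 :: m, ⟨h1, hm⟩, ?_⟩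
      simp only [h2, Fin.val_last, List.length_cons, h3] at hlen ⊢
      linarith

theorem Reach.gadget_fst (h : Reach (gadget E k) x y) : Reach E x.1 y.1 :=
  let ⟨_, hl⟩ := h
  let ⟨m, hm, _⟩ := hl.gadget_fst
  ⟨m, hm⟩

theorem Acyclic.gadget (hacy : Acyclic E) : Acyclic (gadget E k) := by
  intro v l h
  obtain ⟨m, hm, hlen⟩ := h.gadget_fst
  rw [hacy _ m hm] at hlen
  simpa using hlen

theorem reach_gadget_column (v : V) (i : Fin (k + 1)) : Reach (gadget E k) (v, 0) (v, i) := by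
  induction i using Fin.induction with
  | zero => exact Reach.refl _
  | succ i ih => exact ih.trans (Reach.single (Or.inl ⟨rfl, rfl⟩))

theorem Reach.gadget (h : Reach E u v) : Reach (gadget E k) (u, 0) (v, Fin.last k) := by
  obtain ⟨l, hl⟩ := h
  induction l generalizing u with
  | nil => exact (hl : u = v) ▸ reach_gadget_column u _
  | cons x xs ih =>
    have hcross : gadget E k (u, Fin.last k) (x, 0) := Or.inr ⟨hl.1, rfl, rfl⟩
    exact (reach_gadget_column u _).trans ((Reach.single hcross).trans (ih hl.2))

theorem FPath.tc_gadget {D : ℕ} {p : Fin (D + 1) → V} (hp : FPath E p) (hD : 1 ≤ D) :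
    TC (gadget E k) (p 0, 0) (p (Fin.last D), Fin.last k) := by
  refine ⟨fun h => ?_, (hp.reach _).gadget⟩
  have := congrArg Fin.val (hp.1 (congrArg Prod.fst h))
  simp only [Fin.val_zero, Fin.val_last] at this
  omega

end Gadget

section Steps

variable {α : Type*} [DecidableEq α] {H : Finset (α × α)} {x z : α} {l : List α}

def stepsIn (H : Finset (α × α)) (x : α) (l : List α) : List (α × α) :=
  ((x :: l).zip l).filter (· ∈ H)

theorem stepsIn_cons :
    stepsIn H x (z :: l) = if (x, z) ∈ H then (x, z) :: stepsIn H z l else stepsIn H z l := by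
  by_cases h : (x, z) ∈ H <;> simp [stepsIn, h]

theorem nodup_stepsIn (h : (x :: l).Nodup) : (stepsIn H x l).Nodup := by
  refine (List.Nodup.of_map Prod.snd ?_).filter _
  rw [List.map_snd_zip (by simp)]
  exact h.of_cons

theorem mem_of_mem_stepsIn {e : α × α} (he : e ∈ stepsIn H x l) :
    e ∈ H ∧ e.1 ∈ x :: l ∧ e.2 ∈ x :: l := by
  obtain ⟨hzip, heH⟩ := List.mem_filter.1 he
  obtain ⟨h1, h2⟩ := List.of_mem_zip (a := e.1) (b := e.2) hzip
  exact ⟨of_decide_eq_true heH, h1, List.mem_cons_of_mem _ h2⟩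

end Steps

/-- For `x.1` between `s` and `t`, the distance from `(s, 0)` to `x` in `G_k`. -/
noncomputable def gadgetHeight (E : V → V → Prop) (s : V) {k : ℕ} (x : V × Fin (k + 1)) :
    ℕ :=
  dist E s x.1 * (k + 1) + x.2

section Height

variable {E : V → V → Prop} {k : ℕ} {H : Finset ((V × Fin (k + 1)) × (V × Fin (k + 1)))}
  {s t : V} {D : ℕ} {x y z : V × Fin (k + 1)} {l : List (V × Fin (k + 1))}
  (hst : ∀ l, IsWalk E s t l → l.length = D)
include hst

theorem gadgetHeight_of_gadget (hsx : Reach E s x.1) (hxz : gadget E k x z)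
    (hzt : Reach E z.1 t) : gadgetHeight E s z = gadgetHeight E s x + 1 := by
  rcases hxz with ⟨h1, h2⟩ | ⟨h1, h2, h3⟩
  · simp only [gadgetHeight, ← h1, ← h2]
    ring
  · have := dist_eq_dist_add_length hst hsx (m := [z.1]) ⟨h1, rfl⟩ hzt
    simp only [gadgetHeight, this, h2, h3, Fin.val_last, List.length_singleton]
    ring

theorem gadgetHeight_lt (hsx : Reach E s x.1) (hxz : Reach E x.1 z.1) (hzt : Reach E z.1 t) :
    gadgetHeight E s z < gadgetHeight E s x + (k + 1) * (dist E x.1 z.1 + 1) := by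
  obtain ⟨m, hm, hlen⟩ := hxz.exists_isWalk_length_eq_dist
  rw [gadgetHeight, gadgetHeight, dist_eq_dist_add_length hst hsx hm hzt, hlen]
  have := z.2.isLt
  nlinarith

theorem gadgetHeight_le (hH : ∀ e ∈ H, TC (gadget E k) e.1 e.2)
    (h : IsWalk (addE (gadget E k) H) x y l) (hsx : Reach E s x.1) (hyt : Reach E y.1 t) :
    gadgetHeight E s y ≤ gadgetHeight E s x + l.length +
      (k + 1) * ((stepsIn H x l).map fun e => dist E e.1.1 e.2.1 + 1).sum := by
  induction l generalizing x with
  | nil =>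
    obtain rfl : x = y := h
    simp [stepsIn]
  | cons z zs ih =>
    have hxz : Reach E x.1 z.1 := (Reach.of_addE hH (Reach.single h.1)).gadget_fst
    have hzt : Reach E z.1 t := (Reach.of_addE hH ⟨zs, h.2⟩).gadget_fst.trans hyt
    have IH := ih h.2 (hsx.trans hxz)
    rw [stepsIn_cons]
    split_ifs with hH'
    · have := gadgetHeight_lt hst hsx hxz hzt
      simp only [List.map_cons, List.sum_cons, List.length_cons]
      nlinarith
    · have := gadgetHeight_of_gadget hst hsx (h.1.resolve_right hH') hzt
      simp only [List.length_cons]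
      omega

end Height

theorem exists_shortcuts_of_isUniquePath {E : V → V → Prop} {D k : ℕ} {p : Fin (D + 1) → V}
    {H : Finset ((V × Fin (k + 1)) × (V × Fin (k + 1)))} (hacy : Acyclic E) (hp : FPath E p)
    (hup : IsUniquePath E p) (hH : ∀ e ∈ H, TC (gadget E k) e.1 e.2)
    (hdist : 2 * dist (addE (gadget E k) H) (p 0, 0) (p (Fin.last D), Fin.last k) < D * k) :
    ∃ S ⊆ H, D < 2 * ∑ e ∈ S, (dist E e.1.1 e.2.1 + 1) ∧
      ∀ e ∈ S, Reach E (p 0) e.1.1 ∧ Reach E e.2.1 (p (Fin.last D)) := by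
  have hst : ∀ l, IsWalk E (p 0) (p (Fin.last D)) l → l.length = D :=
    fun _ => hup.length_eq_of_isWalk hacy
  have hreach : Reach (addE (gadget E k) H) (p 0, 0) (p (Fin.last D), Fin.last k) :=
    (hp.reach _).gadget.mono fun _ _ => Or.inl
  obtain ⟨l, hl, hlen⟩ := hreach.exists_isWalk_length_eq_dist
  have hheight := gadgetHeight_le hst hH hl (Reach.refl _) (Reach.refl _)
  simp only [gadgetHeight, dist_eq_of_reach hst (hp.reach _), dist_self, Fin.val_last,
    Fin.val_zero, zero_mul, add_zero, zero_add] at hheight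
  have hnodup : (stepsIn H (p 0, 0) l).Nodup := nodup_stepsIn ((hacy.gadget.addE hH).nodup hl)
  refine ⟨(stepsIn H (p 0, 0) l).toFinset, fun e he => (mem_of_mem_stepsIn
    (List.mem_toFinset.1 he)).1, ?_, fun e he => ?_⟩
  · rw [List.sum_toFinset _ hnodup]
    refine Nat.lt_of_mul_lt_mul_left (a := k + 1) ?_
    nlinarith
  · obtain ⟨-, h1, h2⟩ := mem_of_mem_stepsIn (List.mem_toFinset.1 he)
    exact ⟨((hl.reach_of_mem h1).1.of_addE hH).gadget_fst,
      ((hl.reach_of_mem h2).2.of_addE hH).gadget_fst⟩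

theorem shortcut_load_le [DecidableEq V] {E : V → V → Prop} {D Δ : ℕ}
    {Ps T : Finset (Fin (D + 1) → V)} {a b : V} (hacy : Acyclic E)
    (hPs : ∀ p ∈ Ps, IsUniquePath E p)
    (hb : (Ps.filter (fun p => ∃ i : Fin (D + 1), p i = a)).card ≤ Δ)
    (hc : TC E a b → (Ps.filter (fun p =>
      dist (fun x y => E x y ∨ (x = a ∧ y = b)) (p 0) (p (Fin.last D)) < D)).card ≤ 1)
    (hab : Reach E a b) (hT : T ⊆ Ps)
    (hbetween : ∀ p ∈ T, Reach E (p 0) a ∧ Reach E b (p (Fin.last D))) :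
    (dist E a b + 1) * #T ≤ max (2 * Δ) (D + 1) := by
  have hst : ∀ p ∈ T, ∀ l, IsWalk E (p 0) (p (Fin.last D)) l → l.length = D :=
    fun p hp _ => (hPs p (hT hp)).length_eq_of_isWalk hacy
  by_cases hshort : dist E a b ≤ 1
  · have hcard : #T ≤ Δ := le_trans (card_le_card fun p hp => mem_filter.2 ⟨hT hp,
      (hPs p (hT hp)).mem_range hacy (hbetween p hp).1 (hab.trans (hbetween p hp).2)⟩) hb
    calc (dist E a b + 1) * #T ≤ 2 * Δ := Nat.mul_le_mul (by omega) hcard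
      _ ≤ _ := le_max_left _ _
  · have hne : a ≠ b := by
      rintro rfl
      simp [dist_self] at hshort
    have hcard : #T ≤ 1 := le_trans (card_le_card fun p hp => mem_filter.2 ⟨hT hp,
      dist_addEdge_lt (hst p hp) (hbetween p hp).1 hab (hbetween p hp).2 (by omega)⟩)
      (hc ⟨hne, hab⟩)
    obtain rfl | ⟨p, hp⟩ := T.eq_empty_or_nonempty
    · simp
    have hD := dist_le_of_between (hst p hp) (hbetween p hp).1 hab (hbetween p hp).2
    calc (dist E a b + 1) * #T ≤ (D + 1) * 1 := Nat.mul_le_mul (by omega) hcard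
      _ ≤ _ := by simp

theorem sum_sum_le_card_mul {ι κ : Type*} [DecidableEq κ] {s : Finset ι} {t : Finset κ}
    {S : ι → Finset κ} (hS : ∀ i ∈ s, S i ⊆ t) (f : κ → ℕ) {M : ℕ}
    (hM : ∀ j ∈ t, f j * #(s.filter (j ∈ S ·)) ≤ M) :
    ∑ i ∈ s, ∑ j ∈ S i, f j ≤ #t * M := by
  rw [sum_comm' (t' := t) (s' := fun j => s.filter (j ∈ S ·))
    fun i j => ⟨fun h => ⟨mem_filter.2 ⟨h.1, h.2⟩, hS i h.1 h.2⟩,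
      fun h => ⟨(mem_filter.1 h.1).1, (mem_filter.1 h.1).2⟩⟩]
  simp only [sum_const, smul_eq_mul]
  simpa [mul_comm] using sum_le_card_nsmul t _ M fun j hj => (mul_comm _ _).trans_le (hM j hj)

theorem min_le_of_mul_le {P D Δ m : ℕ} (h : P * (D + 1) ≤ 2 * (m * max (2 * Δ) (D + 1))) :
    min ((P : ℝ) / 2) (P * D / (4 * Δ)) ≤ m := by
  rcases le_total (2 * Δ) (D + 1) with hM | hM
  · rw [max_eq_right hM] at h
    have : P ≤ 2 * m := Nat.le_of_mul_le_mul_right (by linarith) (Nat.succ_pos D)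
    refine min_le_of_left_le ?_
    rw [div_le_iff₀ two_pos]
    exact_mod_cast (by linarith : P ≤ m * 2)
  · rw [max_eq_left hM] at h
    refine min_le_of_right_le (div_le_of_le_mul₀ (by positivity) (by positivity) ?_)
    exact_mod_cast (by nlinarith : P * D ≤ m * (4 * Δ))

/-- Let `G` be an `n`-vertex DAG, `D, k, Δ` positive integers, and
`Ps` a collection of directed paths of `G`, each of length exactly `D` (given as
injective vertex sequences `Fin (D+1) → Fin n` with consecutive `E`-edges), such that:
(a) each `p ∈ Ps` is the unique directed path in `G` between its endpoints;
(b) every vertex lies on at most `Δ` paths of `Ps`;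
(c) for every edge `(a,b)` of `G*`, at most one path `p ∈ Ps` has its endpoint
distance reduced strictly below `D` by adding `(a,b)` to `G`.
Let `G_k` (vertices `Fin n × Fin (k+1)`, edge relation `Ek`) be obtained from `G` by
replacing each vertex `v` by a directed path `Q_v` of length `k` and each edge `(u,v)`
by an edge from the last vertex of `Q_u` to the first vertex of `Q_v`. Then every set
`E'` of edges from the transitive closure of `G_k` for which the diameter of
`G_k ∪ E'` is strictly less than `D·k/2` satisfies
`|E'| ≥ min(|Ps|/2, |Ps|·D/(4Δ))`. -/
theorem lower_bound_gadget (n D k Δ : ℕ) (hD : 1 ≤ D)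
    (E : Fin n → Fin n → Prop) (hacy : Acyclic E)
    (Ps : Finset (Fin (D + 1) → Fin n))
    (hpath : ∀ p ∈ Ps, FPath E p)
    (ha : ∀ p ∈ Ps, ∀ (m : ℕ) (q : Fin (m + 1) → Fin n), FPath E q →
      q 0 = p 0 → q (Fin.last m) = p (Fin.last D) →
      ∃ hm : m = D, ∀ i : Fin (m + 1), q i = p (Fin.cast (by rw [hm]) i))
    (hb : ∀ v : Fin n, (Ps.filter (fun p => ∃ i : Fin (D + 1), p i = v)).card ≤ Δ)
    (hc : ∀ a b : Fin n, TC E a b →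
      (Ps.filter (fun p =>
        dist (fun x y => E x y ∨ (x = a ∧ y = b)) (p 0) (p (Fin.last D)) < D)).card ≤ 1)
    (Ek : (Fin n × Fin (k + 1)) → (Fin n × Fin (k + 1)) → Prop)
    (hEk : Ek = fun x y =>
      (x.1 = y.1 ∧ (x.2 : ℕ) + 1 = (y.2 : ℕ)) ∨
      (E x.1 y.1 ∧ x.2 = Fin.last k ∧ (y.2 : ℕ) = 0)) :
    ∀ E' : Finset ((Fin n × Fin (k + 1)) × (Fin n × Fin (k + 1))),
      (∀ e ∈ E', TC Ek e.1 e.2) →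
      (∀ x y : Fin n × Fin (k + 1), TC Ek x y →
        (dist (addE Ek E') x y : ℝ) < (D : ℝ) * (k : ℝ) / 2) →
      min ((Ps.card : ℝ) / 2) ((Ps.card : ℝ) * (D : ℝ) / (4 * (Δ : ℝ))) ≤ (E'.card : ℝ) := by
  obtain rfl : Ek = gadget E k := hEk
  intro E' hE' hdiam
  have hshortcuts : ∀ p ∈ Ps, ∃ S ⊆ E', D < 2 * ∑ e ∈ S, (dist E e.1.1 e.2.1 + 1) ∧
      ∀ e ∈ S, Reach E (p 0) e.1.1 ∧ Reach E e.2.1 (p (Fin.last D)) := by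
    intro p hp
    refine exists_shortcuts_of_isUniquePath hacy (hpath p hp) (ha p hp) hE' ?_
    have := hdiam _ _ ((hpath p hp).tc_gadget hD)
    exact_mod_cast (by linarith : (2 * dist (addE (gadget E k) E') (p 0, 0)
      (p (Fin.last D), Fin.last k) : ℝ) < D * k)
  choose! S hSE' hSweight hSbetween using hshortcuts
  have hload : ∀ e ∈ E', (dist E e.1.1 e.2.1 + 1) * #(Ps.filter (e ∈ S ·)) ≤
      max (2 * Δ) (D + 1) := fun e he =>
    shortcut_load_le hacy ha (hb e.1.1) (hc e.1.1 e.2.1) (hE' e he).2.gadget_fst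
      (filter_subset _ _) fun p hp => hSbetween p (mem_filter.1 hp).1 e (mem_filter.1 hp).2
  apply min_le_of_mul_le
  calc #Ps * (D + 1) ≤ ∑ p ∈ Ps, 2 * ∑ e ∈ S p, (dist E e.1.1 e.2.1 + 1) := by
        simpa using card_nsmul_le_sum Ps _ (D + 1) hSweight
    _ = 2 * ∑ p ∈ Ps, ∑ e ∈ S p, (dist E e.1.1 e.2.1 + 1) := (mul_sum ..).symm
    _ ≤ 2 * (#E' * max (2 * Δ) (D + 1)) :=
        Nat.mul_le_mul_left 2 (sum_sum_le_card_mul hSE' _ hload)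

end Paper
end
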